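/- Fix real constants K ≠ 0, C₁, C₄ ≠ 0, C₅, C₆, C₇, C₈, and define A, B : ℝ → ℝ by A(z) = (K/C₄²)·sinh²(C₄(z+C₅)) and B(z) = C₆·cosh(2C₄(z+C₅)) + C₇·sinh(2C₄(z+C₅)) − (z/2)·(C₁/K + 4C₄C₇) − z²/2 + C₈. Then on all of ℝ: A″(z)A(z) − (A′(z))² + 2K·A(z) = 0 and A(z)B‴(z) − A′(z)(B″(z)+1) + 2K(B′(z)+z) + C₁ = 0. -/

import Mathlib

/-!
Both `A` and `B` are a combination of `cosh (2C₄(z+C₅))` and `sinh (2C₄(z+C₅))` plus a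
quadratic polynomial in `z` (for `A` via `sinh² x = (cosh 2x - 1)/2`). Such functions form a
family closed under differentiation, with an explicit rule on the coefficients, so both identities
reduce to polynomial identities in `cosh` and `sinh` modulo `cosh² - sinh² = 1`.
-/

open Real

noncomputable section

variable (ω c : ℝ)

def coshSinhQuad (p q a b e z : ℝ) : ℝ :=
  p * cosh (ω * (z + c)) + q * sinh (ω * (z + c)) + a + b * z + e * z ^ 2

theorem hasDerivAt_coshSinhQuad (p q a b e z : ℝ) :
    HasDerivAt (coshSinhQuad ω c p q a b e)
      (coshSinhQuad ω c (ω * q) (ω * p) b (2 * e) 0 z) z := by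
  have hlin : HasDerivAt (fun z => ω * (z + c)) ω z := by
    simpa using ((hasDerivAt_id z).add_const c).const_mul ω
  have h : HasDerivAt (coshSinhQuad ω c p q a b e) _ z :=
    ((((hlin.cosh.const_mul p).add (hlin.sinh.const_mul q)).add_const a).add
      ((hasDerivAt_id z).const_mul b)).add ((hasDerivAt_pow 2 z).const_mul e)
  refine h.congr_deriv ?_
  simp only [coshSinhQuad]
  ring

theorem deriv_coshSinhQuad (p q a b e : ℝ) :
    deriv (coshSinhQuad ω c p q a b e) = coshSinhQuad ω c (ω * q) (ω * p) b (2 * e) 0 :=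
  funext fun z => (hasDerivAt_coshSinhQuad ω c p q a b e z).deriv

end

theorem stmt_17 (K C₁ C₄ C₅ C₆ C₇ C₈ : ℝ) (hK : K ≠ 0) (hC₄ : C₄ ≠ 0) :
    let A : ℝ → ℝ := fun z => K / C₄ ^ 2 * Real.sinh (C₄ * (z + C₅)) ^ 2
    let B : ℝ → ℝ := fun z =>
      C₆ * Real.cosh (2 * C₄ * (z + C₅)) + C₇ * Real.sinh (2 * C₄ * (z + C₅))
        - z / 2 * (C₁ / K + 4 * C₄ * C₇) - z ^ 2 / 2 + C₈
    ∀ z : ℝ,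
      deriv (deriv A) z * A z - (deriv A z) ^ 2 + 2 * K * A z = 0 ∧
      A z * deriv (deriv (deriv B)) z - deriv A z * (deriv (deriv B) z + 1)
        + 2 * K * (deriv B z + z) + C₁ = 0 := by
  intro A B z
  have hA : A = coshSinhQuad (2 * C₄) C₅ (K / (2 * C₄ ^ 2)) 0 (-(K / (2 * C₄ ^ 2))) 0 0 := by
    funext x
    simp only [A, coshSinhQuad, mul_assoc 2 C₄, cosh_two_mul, cosh_sq]
    ring
  have hB : B = coshSinhQuad (2 * C₄) C₅ C₆ C₇ C₈ (-(C₁ / K + 4 * C₄ * C₇) / 2) (-1 / 2) := by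
    funext x
    simp only [B, coshSinhQuad]
    ring
  have hPyth := cosh_sq_sub_sinh_sq (2 * C₄ * (z + C₅))
  rw [hA, hB]
  simp only [deriv_coshSinhQuad, coshSinhQuad]
  constructor
  · field_simp
    linear_combination 2 * K ^ 2 * hPyth
  · field_simp
    linear_combination 8 * K * C₄ ^ 3 * C₇ * hPyth
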